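/- arXiv:1808.09956 — 8 statements merged into one kernel-verified Lean document; each statement's English description precedes it below -/
import Mathlib

section
/- For every positive integer k, the polynomial (x+y)^(6k+1) - x^(6k+1) - y^(6k+1) is divisible by x^2 + xy + y^2 in the polynomial ring ℤ[x,y]. -/
open MvPolynomial

theorem stmt0 (k : ℕ) (hk : 0 < k) :
    let x : MvPolynomial (Fin 2) ℤ := X 0
    let y : MvPolynomial (Fin 2) ℤ := X 1
    (x ^ 2 + x * y + y ^ 2) ∣ ((x + y) ^ (6 * k + 1) - x ^ (6 * k + 1) - y ^ (6 * k + 1)) := by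
  intro x y
  clear hk
  induction k with
  | zero => simp
  | succ m ih =>
    have h6x : (x ^ 2 + x * y + y ^ 2) ∣ ((x + y) ^ 6 - x ^ 6) :=
      ⟨(x + y) ^ 4 + (x + y) ^ 2 * (x * y) + (x * y) ^ 2 - x ^ 3 * (x - y), by ring⟩
    have h6y : (x ^ 2 + x * y + y ^ 2) ∣ ((x + y) ^ 6 - y ^ 6) :=
      ⟨(x + y) ^ 4 + (x + y) ^ 2 * (x * y) + (x * y) ^ 2 + y ^ 3 * (x - y), by ring⟩
    have hrw : (x + y) ^ (6 * (m + 1) + 1) - x ^ (6 * (m + 1) + 1) - y ^ (6 * (m + 1) + 1) =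
        (x + y) ^ 6 * ((x + y) ^ (6 * m + 1) - x ^ (6 * m + 1) - y ^ (6 * m + 1))
        + x ^ (6 * m + 1) * ((x + y) ^ 6 - x ^ 6)
        + y ^ (6 * m + 1) * ((x + y) ^ 6 - y ^ 6) := by ring
    rw [hrw]
    exact dvd_add (dvd_add (ih.mul_left _) (h6x.mul_left _)) (h6y.mul_left _)
end

section
/- For all integers r and s and every nonnegative integer k, the 2×2 integer matrices A = [[s, -r], [r, s-r]], B = [[r-s, s], [-s, r]], and C = [[r, s-r], [r-s, s]] satisfy A^(6k+1) + B^(6k+1) = C^(6k+1). -/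
theorem stmt2 (r s : ℤ) (k : ℕ) :
    (!![s, -r; r, s - r] : Matrix (Fin 2) (Fin 2) ℤ) ^ (6 * k + 1)
      + (!![r - s, s; -s, r] : Matrix (Fin 2) (Fin 2) ℤ) ^ (6 * k + 1)
      = (!![r, s - r; r - s, s] : Matrix (Fin 2) (Fin 2) ℤ) ^ (6 * k + 1) := by
  set J : Matrix (Fin 2) (Fin 2) ℤ := !![0, -1; 1, -1] with hJ
  set A : Matrix (Fin 2) (Fin 2) ℤ := !![s, -r; r, s - r] with hA
  have hJ3 : J ^ 3 = 1 := by
    simp [hJ, pow_succ, Matrix.mul_fin_two, Matrix.one_fin_two]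
  have hcomm : Commute J A := by
    simp only [Commute, SemiconjBy, hJ, hA, Matrix.mul_fin_two]
    ring_nf
  have hB : (!![r - s, s; -s, r] : Matrix (Fin 2) (Fin 2) ℤ) = J ^ 2 * A := by
    simp [hJ, hA, pow_two, Matrix.mul_fin_two]
    ring_nf
  have hC : (!![r, s - r; r - s, s] : Matrix (Fin 2) (Fin 2) ℤ) = -(J * A) := by
    simp [hJ, hA, Matrix.mul_fin_two]
    ring_nf
  have hJn : J ^ (6 * k + 1) = J := by
    have : 6 * k + 1 = 3 * (2 * k) + 1 := by ring
    rw [this, pow_add, pow_mul, hJ3, one_pow, one_mul, pow_one]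
  have hJ2n : (J ^ 2) ^ (6 * k + 1) = J ^ 2 := by
    rw [← pow_mul]
    have : 2 * (6 * k + 1) = 3 * (4 * k) + 2 := by ring
    rw [this, pow_add, pow_mul, hJ3, one_pow, one_mul]
  have hodd : Odd (6 * k + 1) := ⟨3 * k, by ring⟩
  rw [hB, hC, hodd.neg_pow, (hcomm.pow_left 2).mul_pow, hcomm.mul_pow, hJn, hJ2n]
  have h1 : (1 : Matrix (Fin 2) (Fin 2) ℤ) + J ^ 2 = -J := by
    simp [hJ, pow_two, Matrix.mul_fin_two, Matrix.one_fin_two]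
  calc A ^ (6 * k + 1) + J ^ 2 * A ^ (6 * k + 1)
      = (1 + J ^ 2) * A ^ (6 * k + 1) := by rw [add_mul, one_mul]
    _ = -(J * A ^ (6 * k + 1)) := by rw [h1, neg_mul]
end

section
/- For all integers r and s and every nonnegative integer k, the 2×2 integer matrices A = [[s, -r], [r, s-r]], B = [[r-s, s], [-s, r]], and C = [[r, s-r], [r-s, s]] satisfy A^(6k+5) + B^(6k+5) = C^(6k+5). -/
theorem stmt3 (r s : ℤ) (k : ℕ) :
    (!![s, -r; r, s - r] : Matrix (Fin 2) (Fin 2) ℤ) ^ (6 * k + 5)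
      + (!![r - s, s; -s, r] : Matrix (Fin 2) (Fin 2) ℤ) ^ (6 * k + 5)
      = (!![r, s - r; r - s, s] : Matrix (Fin 2) (Fin 2) ℤ) ^ (6 * k + 5) := by
  set M : Matrix (Fin 2) (Fin 2) ℤ := !![1, -1; 1, 0] with hM
  set N : Matrix (Fin 2) (Fin 2) ℤ := !![0, 1; -1, 1] with hN
  set C : Matrix (Fin 2) (Fin 2) ℤ := !![r, s - r; r - s, s] with hC
  have hA : (!![s, -r; r, s - r] : Matrix (Fin 2) (Fin 2) ℤ) = M * C := by
    ext i j; fin_cases i <;> fin_cases j <;>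
      simp [hM, hC, Matrix.mul_apply, Fin.sum_univ_two] <;> ring
  have hB : (!![r - s, s; -s, r] : Matrix (Fin 2) (Fin 2) ℤ) = N * C := by
    ext i j; fin_cases i <;> fin_cases j <;>
      simp [hN, hC, Matrix.mul_apply, Fin.sum_univ_two] <;> ring
  have hMC : Commute M C := by
    unfold Commute SemiconjBy
    ext i j; fin_cases i <;> fin_cases j <;>
      simp [hM, hC, Matrix.mul_apply, Fin.sum_univ_two] <;> ring
  have hNC : Commute N C := by
    unfold Commute SemiconjBy
    ext i j; fin_cases i <;> fin_cases j <;>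
      simp [hN, hC, Matrix.mul_apply, Fin.sum_univ_two] <;> ring
  have hM6 : M ^ 6 = 1 := by
    simp [hM, pow_succ, Matrix.mul_fin_two]
    exact Matrix.one_fin_two.symm
  have hN6 : N ^ 6 = 1 := by
    simp [hN, pow_succ, Matrix.mul_fin_two]
    exact Matrix.one_fin_two.symm
  have hMN5 : M ^ 5 + N ^ 5 = 1 := by
    simp [hM, hN, pow_succ, Matrix.mul_fin_two]
    exact Matrix.one_fin_two.symm
  rw [hA, hB, hMC.mul_pow, hNC.mul_pow, ← add_mul]
  have key : ∀ P : Matrix (Fin 2) (Fin 2) ℤ, P ^ 6 = 1 → P ^ (6 * k + 5) = P ^ 5 := by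
    intro P hP
    rw [pow_add, pow_mul, hP, one_pow, one_mul]
  rw [key M hM6, key N hN6, hMN5, one_mul]
end

section
/- The 2×2 integer matrices satisfy [[s, -r], [r, s-r]]^31 + [[r-s, s], [-s, r]]^31 = [[r, s-r], [r-s, s]]^31 for all integers r, s. -/
theorem stmt5 (r s : ℤ) :
    (!![s, -r; r, s - r] : Matrix (Fin 2) (Fin 2) ℤ) ^ 31
      + (!![r - s, s; -s, r] : Matrix (Fin 2) (Fin 2) ℤ) ^ 31
      = (!![r, s - r; r - s, s] : Matrix (Fin 2) (Fin 2) ℤ) ^ 31 := by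
  set J : Matrix (Fin 2) (Fin 2) ℤ := !![0, -1; 1, -1] with hJ
  set A : Matrix (Fin 2) (Fin 2) ℤ := !![s, -r; r, s - r] with hA
  have hJ3 : J ^ 3 = 1 := by
    ext i j
    fin_cases i <;> fin_cases j <;>
      simp [hJ, pow_succ, Matrix.mul_apply, Fin.sum_univ_two]
  have hcomm : Commute J A := by
    show J * A = A * J
    ext i j
    fin_cases i <;> fin_cases j <;>
      simp [hJ, hA, Matrix.mul_apply, Fin.sum_univ_two] <;> ring
  have hB : (!![r - s, s; -s, r] : Matrix (Fin 2) (Fin 2) ℤ) = J ^ 2 * A := by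
    ext i j
    fin_cases i <;> fin_cases j <;>
      simp [hJ, hA, pow_succ, Matrix.mul_apply, Fin.sum_univ_two] <;> ring
  have hC : (!![r, s - r; r - s, s] : Matrix (Fin 2) (Fin 2) ℤ) = -(J * A) := by
    ext i j
    fin_cases i <;> fin_cases j <;>
      simp [hJ, hA, Matrix.mul_apply, Fin.sum_univ_two] <;> ring
  have hJ31 : J ^ 31 = J := by
    have : J ^ 31 = (J ^ 3) ^ 10 * J := by rw [← pow_mul, ← pow_succ]
    rw [this, hJ3, one_pow, one_mul]
  have hJ62 : (J ^ 2) ^ 31 = J ^ 2 := by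
    have : (J ^ 2) ^ 31 = (J ^ 3) ^ 20 * J ^ 2 := by
      rw [← pow_mul, ← pow_mul, ← pow_add]
    rw [this, hJ3, one_pow, one_mul]
  have e1 : (J ^ 2 * A) ^ 31 = J ^ 2 * A ^ 31 := by
    rw [(hcomm.pow_left 2).mul_pow, hJ62]
  have e2 : (-(J * A)) ^ 31 = -(J * A ^ 31) := by
    rw [Odd.neg_pow ⟨15, by norm_num⟩, hcomm.mul_pow, hJ31]
  have hs : (1 : Matrix (Fin 2) (Fin 2) ℤ) + J ^ 2 = -J := by
    ext i j
    fin_cases i <;> fin_cases j <;>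
      simp [hJ, pow_succ, Matrix.mul_apply, Fin.sum_univ_two]
  rw [hB, hC, e1, e2]
  calc A ^ 31 + J ^ 2 * A ^ 31 = (1 + J ^ 2) * A ^ 31 := by noncomm_ring
    _ = -(J * A ^ 31) := by rw [hs, neg_mul]
end

section
/- Let A = [[0,-1],[1,-1]] be the companion matrix of f(x,y) = xy + x^2 + y^2. Then for all integers r, s, f(rA + s·(det A)·I, rI + s·adj A) = 0, i.e., (rA+sI)(rI+s·adj A) + (rA+sI)^2 + (rI+s·adj A)^2 = 0. -/
theorem stmt9 (r s : ℤ) :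
    let A : Matrix (Fin 2) (Fin 2) ℤ := !![0, -1; 1, -1]
    let a := r • A + (s * A.det) • (1 : Matrix (Fin 2) (Fin 2) ℤ)
    let b := r • (1 : Matrix (Fin 2) (Fin 2) ℤ) + s • A.adjugate
    a * b + a ^ 2 + b ^ 2 = 0 := by
  intro A a b
  show a * b + a ^ 2 + b ^ 2 = 0
  simp only [a, b, A, Matrix.det_fin_two_of, Matrix.adjugate_fin_two_of, pow_two]
  ext i j
  fin_cases i <;> fin_cases j <;>
    simp [Matrix.mul_apply, Fin.sum_univ_succ, Matrix.one_apply, Matrix.smul_apply, Matrix.add_apply, ← Matrix.diagonal_intCast, Matrix.diagonal_apply] <;> ring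
end

section
/- In any commutative ring R, if elements a, b satisfy ab + a^2 + b^2 = 0, then for every nonnegative integer k, (a+b)^(6k+1) = a^(6k+1) + b^(6k+1). -/
theorem stmt13 {R : Type*} [CommRing R] (a b : R) (h : a * b + a ^ 2 + b ^ 2 = 0) (k : ℕ) :
    (a + b) ^ (6 * k + 1) = a ^ (6 * k + 1) + b ^ (6 * k + 1) := by
  have h2 : (a + b) ^ 2 = a * b := by linear_combination h
  have h3 : a ^ 3 = b ^ 3 := by linear_combination (a - b) * h
  have h6a : (a + b) ^ 6 = a ^ 6 := by
    calc (a + b) ^ 6 = ((a + b) ^ 2) ^ 3 := by ring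
    _ = (a * b) ^ 3 := by rw [h2]
    _ = a ^ 3 * b ^ 3 := by ring
    _ = a ^ 3 * a ^ 3 := by rw [h3]
    _ = a ^ 6 := by ring
  have h6b : (a + b) ^ 6 = b ^ 6 := by
    rw [h6a]; linear_combination (a ^ 3 + b ^ 3) * h3
  have ha : (a + b) ^ (6 * k) = a ^ (6 * k) := by rw [pow_mul, h6a, ← pow_mul]
  have hb : (a + b) ^ (6 * k) = b ^ (6 * k) := by rw [pow_mul, h6b, ← pow_mul]
  calc (a + b) ^ (6 * k + 1)
      = (a + b) ^ (6 * k) * a + (a + b) ^ (6 * k) * b := by rw [pow_succ]; ring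
    _ = a ^ (6 * k) * a + b ^ (6 * k) * b := by nth_rewrite 1 [ha]; rw [hb]
    _ = a ^ (6 * k + 1) + b ^ (6 * k + 1) := by rw [pow_succ, pow_succ]
end

section
/- In any commutative ring R, if elements a, b satisfy ab + a^2 + b^2 = 0, then for every nonnegative integer k, (a+b)^(6k+5) = a^(6k+5) + b^(6k+5). -/
theorem stmt14 {R : Type*} [CommRing R] (a b : R) (h : a * b + a ^ 2 + b ^ 2 = 0) (k : ℕ) :
    (a + b) ^ (6 * k + 5) = a ^ (6 * k + 5) + b ^ (6 * k + 5) := by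
  have h3 : a ^ 3 = b ^ 3 := by linear_combination (a - b) * h
  have h2 : (a + b) ^ 2 = a * b := by linear_combination h
  have h6a : (a + b) ^ 6 = a ^ 6 := by
    have : (a + b) ^ 6 = (a * b) ^ 3 := by rw [← h2]; ring
    rw [this]; linear_combination (-(a ^ 3)) * h3
  have h6b : (a + b) ^ 6 = b ^ 6 := by
    have : (a + b) ^ 6 = (a * b) ^ 3 := by rw [← h2]; ring
    rw [this]; linear_combination (b ^ 3) * h3
  induction k with
  | zero => simpa using by linear_combination (5 * a * b * (a + b)) * h
  | succ n ih =>
      rw [show 6 * (n + 1) + 5 = (6 * n + 5) + 6 from by ring, pow_add, ih]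
      linear_combination (a ^ (6 * n + 5)) * h6a + (b ^ (6 * n + 5)) * h6b
end

section
/- For every positive integer m with m ≡ 1 (mod 6) or m ≡ 5 (mod 6), and all integers r, s, the matrices X = [[s, -r], [r, s-r]], Y = [[r-s, s], [-s, r]], Z = [[r, s-r], [r-s, s]] satisfy X^m + Y^m = Z^m. -/
theorem stmt19 (m : ℕ) (hm : 0 < m) (h : m % 6 = 1 ∨ m % 6 = 5) (r s : ℤ) :
    (!![s, -r; r, s - r] : Matrix (Fin 2) (Fin 2) ℤ) ^ m
      + (!![r - s, s; -s, r] : Matrix (Fin 2) (Fin 2) ℤ) ^ m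
      = (!![r, s - r; r - s, s] : Matrix (Fin 2) (Fin 2) ℤ) ^ m := by
  set X := (!![s, -r; r, s - r] : Matrix (Fin 2) (Fin 2) ℤ) with hXdef
  set A := (!![0, -1; 1, -1] : Matrix (Fin 2) (Fin 2) ℤ) with hAdef
  have comm : Commute A X := by
    show A * X = X * A
    ext i j
    fin_cases i <;> fin_cases j <;>
      simp [hAdef, hXdef, Matrix.mul_apply, Fin.sum_univ_succ] <;> ring
  have hY : (!![r - s, s; -s, r] : Matrix (Fin 2) (Fin 2) ℤ) = A ^ 2 * X := by
    ext i j
    fin_cases i <;> fin_cases j <;>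
      simp [hAdef, hXdef, pow_two, Matrix.mul_apply, Fin.sum_univ_succ] <;> ring
  have hZ : (!![r, s - r; r - s, s] : Matrix (Fin 2) (Fin 2) ℤ) = (-A) * X := by
    ext i j
    fin_cases i <;> fin_cases j <;>
      simp [hAdef, hXdef, Matrix.mul_apply, Fin.sum_univ_succ] <;> ring
  rw [hY, hZ, (comm.pow_left 2).mul_pow, comm.neg_left.mul_pow]
  have h6a : (A ^ 2) ^ 6 = 1 := by
    norm_num [pow_succ, hAdef, Matrix.mul_fin_two, Matrix.one_fin_two]
    exact Matrix.one_fin_two.symm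
  have h6b : (-A) ^ 6 = 1 := by
    norm_num [pow_succ, hAdef, Matrix.mul_fin_two, Matrix.one_fin_two,
      Matrix.neg_mul, Matrix.mul_neg]
    exact Matrix.one_fin_two.symm
  have key : (1 : Matrix (Fin 2) (Fin 2) ℤ) + (A ^ 2) ^ m = (-A) ^ m := ?_
  · rw [← key, add_mul, one_mul]
  rcases h with h | h
  · obtain ⟨k, rfl⟩ : ∃ k, m = 6 * k + 1 := ⟨m / 6, by omega⟩
    rw [pow_add, pow_mul, h6a, one_pow, one_mul, pow_add, pow_mul, h6b, one_pow, one_mul]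
    norm_num [pow_succ, hAdef, Matrix.mul_fin_two, Matrix.one_fin_two]
    ext i j
    fin_cases i <;> fin_cases j <;> rfl
  · obtain ⟨k, rfl⟩ : ∃ k, m = 6 * k + 5 := ⟨m / 6, by omega⟩
    rw [pow_add, pow_mul, h6a, one_pow, one_mul, pow_add, pow_mul, h6b, one_pow, one_mul]
    norm_num [pow_succ, hAdef, Matrix.mul_fin_two, Matrix.one_fin_two,
      Matrix.neg_mul, Matrix.mul_neg]
    ext i j
    fin_cases i <;> fin_cases j <;> rfl
end
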